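/- Let f : ℝ → ℝ satisfy f'(s)s ≤ c₁|s|^p for |s| ≥ 1 and f'(s)s ≤ c₁|s|^q for |s| ≤ 1, and f(s) ≥ c₀|s|^p for |s| ≥ 1, f(s) ≥ c₀|s|^q for |s| ≤ 1, with 2 < p < q and c₀, c₁ > 0. Then for every measurable function w on a measure space (X, μ) and every t ∈ (0, 1], ∫ f'(t w) (t w) dμ ≤ (c₁ t^p / c₀) ∫ f(w) dμ, provided both integrals are finite. -/

import Mathlib

open MeasureTheory

/-!
Let `m(s)` be `|s| ^ p` for `|s| ≥ 1` and `|s| ^ q` for `|s| < 1`. The hypotheses say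
`f'(s) s ≤ c₁ m(s)` and `c₀ m(s) ≤ f(s)`, and for `0 < t ≤ 1` one has `m(t s) ≤ t ^ p m(s)`:
either `t s` stays in the regime of `s` and `t ^ q ≤ t ^ p`, or it drops below `1`, where
`|t s| ^ q ≤ |t s| ^ p`. Integrating `f'(t s) t s ≤ (c₁ t ^ p / c₀) f(s)` gives the claim.
-/

noncomputable def twoRegimePow (p q s : ℝ) : ℝ :=
  if 1 ≤ |s| then |s| ^ p else |s| ^ q

section TwoRegimePow

variable {p q : ℝ}

lemma le_mul_twoRegimePow {g : ℝ → ℝ} {c : ℝ}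
    (hp : ∀ s, 1 ≤ |s| → g s ≤ c * |s| ^ p) (hq : ∀ s, |s| ≤ 1 → g s ≤ c * |s| ^ q) (s : ℝ) :
    g s ≤ c * twoRegimePow p q s := by
  unfold twoRegimePow
  split_ifs with hs
  · exact hp s hs
  · exact hq s (not_le.mp hs).le

lemma mul_twoRegimePow_le {g : ℝ → ℝ} {c : ℝ}
    (hp : ∀ s, 1 ≤ |s| → c * |s| ^ p ≤ g s) (hq : ∀ s, |s| ≤ 1 → c * |s| ^ q ≤ g s) (s : ℝ) :
    c * twoRegimePow p q s ≤ g s := by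
  unfold twoRegimePow
  split_ifs with hs
  · exact hp s hs
  · exact hq s (not_le.mp hs).le

lemma twoRegimePow_mul_le (hpq : p ≤ q) {t : ℝ} (ht₀ : 0 < t) (ht₁ : t ≤ 1) (s : ℝ) :
    twoRegimePow p q (t * s) ≤ t ^ p * twoRegimePow p q s := by
  have habs : |t * s| = t * |s| := by rw [abs_mul, abs_of_pos ht₀]
  have hscale : ∀ r : ℝ, |t * s| ^ r = t ^ r * |s| ^ r := fun r => by
    rw [habs, Real.mul_rpow ht₀.le (abs_nonneg s)]
  have hts_le : |t * s| ≤ |s| := by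
    rw [habs]; exact mul_le_of_le_one_left (abs_nonneg s) ht₁
  unfold twoRegimePow
  split_ifs with hts hs hs
  · exact (hscale p).le
  · exact absurd (hts.trans hts_le) hs
  · have hts_pos : 0 < |t * s| := by rw [habs]; exact mul_pos ht₀ (by linarith)
    calc |t * s| ^ q ≤ |t * s| ^ p :=
          Real.rpow_le_rpow_of_exponent_ge hts_pos (not_le.mp hts).le hpq
      _ = t ^ p * |s| ^ p := hscale p
  · rw [hscale q]
    exact mul_le_mul_of_nonneg_right (Real.rpow_le_rpow_of_exponent_ge ht₀ ht₁ hpq)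
      (Real.rpow_nonneg (abs_nonneg s) q)

end TwoRegimePow

lemma le_div_mul_of_twoRegime_bounds {φ f : ℝ → ℝ} {c₀ c₁ p q t : ℝ}
    (hc₀ : 0 < c₀) (hc₁ : 0 < c₁) (hpq : p ≤ q) (ht₀ : 0 < t) (ht₁ : t ≤ 1)
    (hφp : ∀ s, 1 ≤ |s| → φ s ≤ c₁ * |s| ^ p) (hφq : ∀ s, |s| ≤ 1 → φ s ≤ c₁ * |s| ^ q)
    (hfp : ∀ s, 1 ≤ |s| → c₀ * |s| ^ p ≤ f s) (hfq : ∀ s, |s| ≤ 1 → c₀ * |s| ^ q ≤ f s)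
    (s : ℝ) :
    φ (t * s) ≤ c₁ * t ^ p / c₀ * f s := by
  have hm : twoRegimePow p q s ≤ f s / c₀ :=
    (le_div_iff₀' hc₀).mpr (mul_twoRegimePow_le hfp hfq s)
  calc φ (t * s) ≤ c₁ * twoRegimePow p q (t * s) := le_mul_twoRegimePow hφp hφq _
    _ ≤ c₁ * (t ^ p * (f s / c₀)) := by
        gcongr
        exact (twoRegimePow_mul_le hpq ht₀ ht₁ s).trans
          (mul_le_mul_of_nonneg_left hm (Real.rpow_nonneg ht₀.le p))
    _ = c₁ * t ^ p / c₀ * f s := by ring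

theorem stmt3_general {X : Type*} [MeasurableSpace X] (ν : Measure X)
    (w : X → ℝ)
    (f : ℝ → ℝ)
    (c0 c1 p q : ℝ) (hc0 : 0 < c0) (hc1 : 0 < c1) (hpq : p < q)
    (hfp : ∀ s : ℝ, 1 ≤ |s| → deriv f s * s ≤ c1 * |s| ^ p)
    (hfq : ∀ s : ℝ, |s| ≤ 1 → deriv f s * s ≤ c1 * |s| ^ q)
    (hgp : ∀ s : ℝ, 1 ≤ |s| → c0 * |s| ^ p ≤ f s)
    (hgq : ∀ s : ℝ, |s| ≤ 1 → c0 * |s| ^ q ≤ f s)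
    (t : ℝ) (ht : t ∈ Set.Ioc (0 : ℝ) 1)
    (hint1 : Integrable (fun x => deriv f (t * w x) * (t * w x)) ν)
    (hint2 : Integrable (fun x => f (w x)) ν) :
    ∫ x, deriv f (t * w x) * (t * w x) ∂ν ≤ (c1 * t ^ p / c0) * ∫ x, f (w x) ∂ν := by
  have hpointwise : ∀ x, deriv f (t * w x) * (t * w x) ≤ c1 * t ^ p / c0 * f (w x) :=
    fun x => le_div_mul_of_twoRegime_bounds (φ := fun s => deriv f s * s)
      hc0 hc1 hpq.le ht.1 ht.2 hfp hfq hgp hgq (w x)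
  calc ∫ x, deriv f (t * w x) * (t * w x) ∂ν
      ≤ ∫ x, c1 * t ^ p / c0 * f (w x) ∂ν := integral_mono hint1 (hint2.const_mul _) hpointwise
    _ = c1 * t ^ p / c0 * ∫ x, f (w x) ∂ν := integral_const_mul _ _

/-- `∫ f'(t w)(t w) dμ ≤ (c₁ t^p / c₀) ∫ f(w) dμ` for `t ∈ (0,1]`. -/
theorem stmt3 {X : Type*} [MeasurableSpace X] (ν : Measure X)
    (w : X → ℝ) (hw : Measurable w)
    (f : ℝ → ℝ) (hdf : Differentiable ℝ f)
    (c0 c1 p q : ℝ) (hc0 : 0 < c0) (hc1 : 0 < c1) (hp : 2 < p) (hpq : p < q)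
    (hfp : ∀ s : ℝ, 1 ≤ |s| → deriv f s * s ≤ c1 * |s| ^ p)
    (hfq : ∀ s : ℝ, |s| ≤ 1 → deriv f s * s ≤ c1 * |s| ^ q)
    (hgp : ∀ s : ℝ, 1 ≤ |s| → c0 * |s| ^ p ≤ f s)
    (hgq : ∀ s : ℝ, |s| ≤ 1 → c0 * |s| ^ q ≤ f s)
    (t : ℝ) (ht : t ∈ Set.Ioc (0 : ℝ) 1)
    (hint1 : Integrable (fun x => deriv f (t * w x) * (t * w x)) ν)
    (hint2 : Integrable (fun x => f (w x)) ν) :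
    ∫ x, deriv f (t * w x) * (t * w x) ∂ν ≤ (c1 * t ^ p / c0) * ∫ x, f (w x) ∂ν :=
  stmt3_general ν w f c0 c1 p q hc0 hc1 hpq hfp hfq hgp hgq t ht hint1 hint2
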